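/- Let k be a positive integer, let C be a binary extremal doubly even self-dual code of length 24k (minimum Hamming weight 4k+4), and let D be a binary linear code of length 24k strictly containing C. Then D contains a non-zero vector of Hamming weight at most 4k. -/

import Mathlib

open Finset

namespace Z4Note

variable {ι : Type*} [Fintype ι]

/-- Hamming weight of a binary vector. -/
def hWt (x : ι → ZMod 2) : ℕ := (Finset.univ.filter fun i => x i ≠ 0).card

/-- Lee value of an element of `ZMod 4`:  0 ↦ 0, 1 ↦ 1, 2 ↦ 2, 3 ↦ 1. -/
def leeVal (a : ZMod 4) : ℕ := min a.val (4 - a.val)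

/-- Lee weight `n₁(x) + 2 n₂(x) + n₃(x)`. -/
def leeWt (x : ι → ZMod 4) : ℕ := ∑ i, leeVal (x i)

/-- Euclidean weight `n₁(x) + 4 n₂(x) + n₃(x)`. -/
def eucWt (x : ι → ZMod 4) : ℕ := ∑ i, (leeVal (x i)) ^ 2

/-- Number of coordinates of `x` equal to `a`. -/
def nCount (a : ZMod 4) (x : ι → ZMod 4) : ℕ := (Finset.univ.filter fun i => x i = a).card

/-- Dual of a `ZMod 4`-code (as a set), w.r.t. the standard inner product. -/
def dualZ4 (C : Set (ι → ZMod 4)) : Set (ι → ZMod 4) :=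
  {x | ∀ y ∈ C, ∑ i, x i * y i = 0}

/-- Dual of a binary code (as a set), w.r.t. the standard inner product. -/
def dual2 (C : Set (ι → ZMod 2)) : Set (ι → ZMod 2) :=
  {x | ∀ y ∈ C, ∑ i, x i * y i = 0}

/-- A `ZMod 4`-code is self-dual if it equals its dual. -/
def SelfDualZ4 (C : Submodule (ZMod 4) (ι → ZMod 4)) : Prop :=
  (C : Set (ι → ZMod 4)) = dualZ4 (C : Set (ι → ZMod 4))

/-- A binary code is self-dual if it equals its dual. -/
def SelfDual2 (D : Submodule (ZMod 2) (ι → ZMod 2)) : Prop :=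
  (D : Set (ι → ZMod 2)) = dual2 (D : Set (ι → ZMod 2))

/-- Coordinatewise reduction modulo 2. -/
def res2 (x : ι → ZMod 4) : ι → ZMod 2 :=
  fun i => ZMod.castHom (by norm_num : (2:ℕ) ∣ 4) (ZMod 2) (x i)

/-- The residue code `C⁽¹⁾ = {c mod 2 : c ∈ C}`. -/
def residue (C : Set (ι → ZMod 4)) : Set (ι → ZMod 2) := res2 '' C

/-- Minimum Lee weight among nonzero codewords. -/
noncomputable def minLee (C : Set (ι → ZMod 4)) : ℕ := sInf {d | ∃ x ∈ C, x ≠ 0 ∧ leeWt x = d}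

/-- Minimum Euclidean weight among nonzero codewords. -/
noncomputable def minEuc (C : Set (ι → ZMod 4)) : ℕ := sInf {d | ∃ x ∈ C, x ≠ 0 ∧ eucWt x = d}

/-- Minimum Hamming weight among nonzero codewords of a binary code. -/
noncomputable def minHam (C : Set (ι → ZMod 2)) : ℕ := sInf {d | ∃ x ∈ C, x ≠ 0 ∧ hWt x = d}

/-- A binary code is doubly even if all weights are divisible by 4. -/
def DoublyEven (C : Set (ι → ZMod 2)) : Prop := ∀ x ∈ C, 4 ∣ hWt x

/-- A binary code is singly even if some codeword has weight not divisible by 4. -/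
def SinglyEven (C : Set (ι → ZMod 2)) : Prop := ∃ x ∈ C, ¬ 4 ∣ hWt x

/-- A self-dual `ZMod 4`-code is Type II if all Euclidean weights are divisible by 8. -/
def TypeII (C : Set (ι → ZMod 4)) : Prop := ∀ x ∈ C, 8 ∣ eucWt x

/-- The doubly even subcode of a binary code. -/
def evenSubcode (D : Set (ι → ZMod 2)) : Set (ι → ZMod 2) := {x ∈ D | 4 ∣ hWt x}

/-- The shadow `S = D₀^⊥ \ D` of a binary code. -/
def shadow (D : Set (ι → ZMod 2)) : Set (ι → ZMod 2) := dual2 (evenSubcode D) \ D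

/-- A binary singly even self-dual code is s-extremal if equality holds in the
Bachoc–Gaborit bound relating the minimum weight of the code and of its shadow. -/
def SExtremal (D : Submodule (ZMod 2) (ι → ZMod 2)) : Prop :=
  SelfDual2 D ∧ SinglyEven (D : Set (ι → ZMod 2)) ∧
  ((¬ (Fintype.card ι % 24 = 22 ∧
        minHam (D : Set (ι → ZMod 2)) = 4 * (Fintype.card ι / 24) + 6)) →
      minHam (shadow (D : Set (ι → ZMod 2))) + 2 * minHam (D : Set (ι → ZMod 2)) =
        Fintype.card ι / 2 + 4) ∧
  ((Fintype.card ι % 24 = 22 ∧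
        minHam (D : Set (ι → ZMod 2)) = 4 * (Fintype.card ι / 24) + 6) →
      minHam (shadow (D : Set (ι → ZMod 2))) + 2 * minHam (D : Set (ι → ZMod 2)) =
        Fintype.card ι / 2 + 8)

/-- Equivalence of `ZMod 4`-codes: coordinate permutation together with sign changes. -/
def Z4Equiv (C C' : Set (ι → ZMod 4)) : Prop :=
  ∃ σ : Equiv.Perm ι, ∃ ε : ι → ZMod 4, (∀ i, ε i = 1 ∨ ε i = -1) ∧
    C' = (fun x => fun i => ε i * x (σ i)) '' C

/-- Covering radius of a binary code. -/
noncomputable def covRad (C : Set (ι → ZMod 2)) : ℕ :=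
  sInf {R | ∀ v : ι → ZMod 2, ∃ c ∈ C, hWt (v - c) ≤ R}

/-- Entry `(i,j)` of the circulant matrix with first row `r`. -/
def circEntry {m : ℕ} (r : Fin m → ZMod 4) (i j : Fin m) : ZMod 4 := r (j - i)

/-- Entry `(i,j)` of the negacirculant matrix with first row `r`. -/
def negaEntry {m : ℕ} (r : Fin m → ZMod 4) (i j : Fin m) : ZMod 4 :=
  if i.val ≤ j.val then r (j - i) else - r (j - i)

/-- The bordered part `B` of the generator matrix of a bordered double circulant code. -/
def bdcB {m : ℕ} (α β γ : ZMod 4) (r : Fin m → ZMod 4) :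
    Fin (m+1) → Fin (m+1) → ZMod 4 :=
  Fin.cases (Fin.cases α fun _ => β) (fun i' => Fin.cases γ fun j' => circEntry r i' j')

/-- Row `i` of the generator matrix `(I | B)` of a bordered double circulant code. -/
def bdcRow {m : ℕ} (α β γ : ZMod 4) (r : Fin m → ZMod 4) (i : Fin (m+1)) :
    (Fin (m+1) ⊕ Fin (m+1)) → ZMod 4 :=
  Sum.elim (fun j => if j = i then 1 else 0) (bdcB α β γ r i)

/-- The bordered double circulant code of length `2(m+1)`. -/
def bdcCode {m : ℕ} (α β γ : ZMod 4) (r : Fin m → ZMod 4) :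
    Submodule (ZMod 4) ((Fin (m+1) ⊕ Fin (m+1)) → ZMod 4) :=
  Submodule.span (ZMod 4) (Set.range (bdcRow α β γ r))

/-- The block matrix `[[A, B], [-Bᵀ, Aᵀ]]` built from negacirculant `A`, `B`. -/
def fourNegaM {n : ℕ} (a b : Fin n → ZMod 4) :
    (Fin n ⊕ Fin n) → (Fin n ⊕ Fin n) → ZMod 4
  | Sum.inl i, Sum.inl j => negaEntry a i j
  | Sum.inl i, Sum.inr j => negaEntry b i j
  | Sum.inr i, Sum.inl j => - negaEntry b j i
  | Sum.inr i, Sum.inr j => negaEntry a j i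

/-- Row `i` of the generator matrix `(I | M)` of a four-negacirculant code. -/
def fourNegaRow {n : ℕ} (a b : Fin n → ZMod 4) (i : Fin n ⊕ Fin n) :
    ((Fin n ⊕ Fin n) ⊕ (Fin n ⊕ Fin n)) → ZMod 4 :=
  Sum.elim (fun j => if j = i then 1 else 0) (fourNegaM a b i)

/-- The four-negacirculant code of length `4n`. -/
def fourNegaCode {n : ℕ} (a b : Fin n → ZMod 4) :
    Submodule (ZMod 4) (((Fin n ⊕ Fin n) ⊕ (Fin n ⊕ Fin n)) → ZMod 4) :=
  Submodule.span (ZMod 4) (Set.range (fourNegaRow a b))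

end Z4Note

/-!
Delsarte's bound: every vector `v` lies within distance `s` of `C^⊥`, where `s` is the number of
nonzero weights of `C`. The Fourier transform of the indicator of the sphere of radius `t` is
`u ↦ K_t (wt u)` for the Krawtchouk polynomial `K_t`, of degree exactly `t`, so the annihilator
`Q = ∏_w (X - w)` of the nonzero weights is the Fourier transform of a radial function `g`
supported on weights `≤ s`. Then `∑_{u ∈ C} ∑_z g (wt z) (-1)^(u⬝(v+z))` equals
`∑_{u ∈ C} (-1)^(u⬝v) Q (wt u) = Q 0 ≠ 0`, while for fixed `z` the sum over `u ∈ C` vanishes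
unless `v + z ∈ C^⊥`. Hence `v + z ∈ C^⊥` for some `z` with `g (wt z) ≠ 0`, that is with `wt z ≤ s`.

A doubly even self-dual code contains the all-ones vector, so the nonzero weights of an extremal
one of length `24k` lie in `{4k+4, 4k+8, …, 20k-4, 24k}`, a set of `4k` numbers. A vector of
`D \ C` is therefore within distance `4k` of `C`, and its difference with a closest codeword is
the required vector of `D`.
-/

namespace Polynomial

variable {K : Type*} [Field K]

theorem exists_eq_sum_smul_of_degree_lt (p : ℕ → K[X]) (hdeg : ∀ t, (p t).natDegree ≤ t)
    (hcoeff : ∀ t, (p t).coeff t ≠ 0) (d : ℕ) (Q : K[X]) (hQ : Q.degree < d) :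
    ∃ γ : ℕ → K, (∀ t, d ≤ t → γ t = 0) ∧ Q = ∑ t ∈ Finset.range d, γ t • p t := by
  induction d generalizing Q with
  | zero => exact ⟨0, fun _ _ => rfl, by simpa using hQ⟩
  | succ d ih =>
    set c := Q.coeff d / (p d).coeff d
    have hlt : (Q - c • p d).degree < d := by
      rw [degree_lt_iff_coeff_zero]
      intro m hm
      rcases hm.eq_or_lt with rfl | hm
      · simp [c, hcoeff]
      · rw [coeff_sub, coeff_smul, coeff_eq_zero_of_degree_lt (hQ.trans_le (by exact_mod_cast hm)),
          coeff_eq_zero_of_natDegree_lt ((hdeg d).trans_lt hm), smul_zero, sub_zero]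
    obtain ⟨γ, hγ, hsum⟩ := ih _ hlt
    refine ⟨Function.update γ d c, fun t ht => ?_, ?_⟩
    · rw [Function.update_of_ne (by omega), hγ t (by omega)]
    · rw [Finset.sum_range_succ, Function.update_self, ← sub_eq_iff_eq_add, hsum]
      exact Finset.sum_congr rfl fun t ht => by
        rw [Function.update_of_ne (Finset.mem_range.1 ht).ne]

end Polynomial

namespace Z4Note

open Polynomial Finset Nat

theorem zmod_two_eq_zero_or_one (b : ZMod 2) : b = 0 ∨ b = 1 := by
  revert b
  decide

/-- `K_t = ∑_j (-2)^j C(n-j, t-j) C(X, j)`, the form in which only the term `j = t` has degree `t`;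
`descPochhammer ℚ j / j !` is the binomial polynomial `C(X, j)`. -/
noncomputable def krawtchouk (n t : ℕ) : ℚ[X] :=
  ∑ j ∈ range (t + 1), C ((-2) ^ j * (n - j).choose (t - j) / (j ! : ℚ)) * descPochhammer ℚ j

theorem krawtchouk_natDegree_le (n t : ℕ) : (krawtchouk n t).natDegree ≤ t :=
  natDegree_sum_le_of_forall_le _ _ fun j hj => (natDegree_C_mul_le _ _).trans
    ((descPochhammer_natDegree ℚ j).trans_le (Nat.lt_succ_iff.1 (mem_range.1 hj)))

theorem krawtchouk_coeff_self (n t : ℕ) : (krawtchouk n t).coeff t = (-2) ^ t / (t ! : ℚ) := by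
  have hmonic : (descPochhammer ℚ t).coeff t = 1 := by
    simpa [descPochhammer_natDegree] using (monic_descPochhammer ℚ t).coeff_natDegree
  rw [krawtchouk, finsetSum_coeff, sum_range_succ, sum_eq_zero fun j hj => ?_]
  · simp [coeff_C_mul, hmonic]
  · rw [coeff_C_mul, coeff_eq_zero_of_natDegree_lt, mul_zero]
    simpa using mem_range.1 hj

theorem krawtchouk_eval_natCast (n t m : ℕ) :
    (krawtchouk n t).eval (m : ℚ) =
      ∑ j ∈ range (t + 1), (-2 : ℚ) ^ j * (n - j).choose (t - j) * m.choose j := by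
  simp only [krawtchouk, eval_finsetSum, eval_mul, eval_C]
  exact sum_congr rfl fun j _ => by rw [cast_choose_eq_descPochhammer_div (K := ℚ) m j]; ring

theorem coeff_one_sub_X_pow_mul_one_add_X_pow {n m : ℕ} (hm : m ≤ n) (t : ℕ) :
    ((1 - X) ^ m * (1 + X) ^ (n - m) : ℚ[X]).coeff t = (krawtchouk n t).eval (m : ℚ) := by
  have hexp : ((1 - X) ^ m * (1 + X) ^ (n - m) : ℚ[X]) =
      ∑ j ∈ range (m + 1), C ((-2) ^ j * m.choose j : ℚ) * (X ^ j * (1 + X) ^ (n - j)) := by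
    rw [show (1 - X : ℚ[X]) = -2 * X + (1 + X) by ring, add_pow, sum_mul]
    refine sum_congr rfl fun j hj => ?_
    rw [show n - j = (m - j) + (n - m) by have := mem_range.1 hj; omega, pow_add]
    simp only [map_mul, map_pow, map_neg, map_natCast, C_ofNat]
    ring
  rw [hexp, finsetSum_coeff, krawtchouk_eval_natCast]
  simp only [coeff_C_mul, coeff_X_pow_mul', coeff_one_add_X_pow]
  rw [sum_subset (range_subset_range.2 (Nat.le_add_right (m + 1) t)) fun j _ hj => ?_,
    ← sum_subset (range_subset_range.2 (by omega : t + 1 ≤ m + 1 + t)) fun j _ hj => ?_]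
  · exact sum_congr rfl fun j hj => by
      rw [if_pos (Nat.lt_succ_iff.1 (mem_range.1 hj))]; ring
  · simp [show ¬j ≤ t by simpa using hj]
  · simp [choose_eq_zero_of_lt (show m < j by simpa using hj)]

def signChar : AddChar (ZMod 2) ℚ where
  toFun a := (-1) ^ a.val
  map_zero_eq_one' := rfl
  map_add_eq_mul' a b := by rw [ZMod.val_add, ← pow_add, ← neg_one_pow_eq_pow_mod_two]

theorem signChar_one : signChar 1 = -1 := rfl

theorem signChar_sum {ι : Type*} [DecidableEq ι] (s : Finset ι) (a : ι → ZMod 2) :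
    signChar (∑ i ∈ s, a i) = ∏ i ∈ s, signChar (a i) := by
  induction s using Finset.induction_on with
  | empty => simp
  | insert i s hi ih => rw [sum_insert hi, prod_insert hi, AddChar.map_add_eq_mul, ih]

variable {ι : Type*} [Fintype ι]

theorem hWt_le_card (x : ι → ZMod 2) : hWt x ≤ Fintype.card ι := hammingNorm_le_card_fintype

theorem hWt_ne_zero {x : ι → ZMod 2} (hx : x ≠ 0) : hWt x ≠ 0 := hammingNorm_ne_zero_iff.2 hx

theorem minHam_le_hWt {C : Set (ι → ZMod 2)} {c : ι → ZMod 2} (hc : c ∈ C) (hc0 : c ≠ 0) :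
    minHam C ≤ hWt c :=
  Nat.sInf_le ⟨c, hc, hc0, rfl⟩

theorem sum_eq_hWt (y : ι → ZMod 2) : ∑ i, y i = (hWt y : ZMod 2) := by
  rw [hWt, ← sum_boole]
  refine sum_congr rfl fun i _ => ?_
  rcases zmod_two_eq_zero_or_one (y i) with h | h <;> simp [h]

theorem one_mem_dual2_of_even {C : Set (ι → ZMod 2)} (hC : ∀ x ∈ C, 2 ∣ hWt x) :
    (1 : ι → ZMod 2) ∈ dual2 C := fun y hy => by
  simpa [sum_eq_hWt, ZMod.natCast_eq_zero_iff] using hC y hy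

theorem hWt_one_add (c : ι → ZMod 2) : hWt (1 + c) = Fintype.card ι - hWt c := by
  have hfilter : univ.filter (fun i => (1 + c) i ≠ 0) = univ.filter fun i => ¬ c i ≠ 0 := by
    ext i
    rcases zmod_two_eq_zero_or_one (c i) with h | h
    · simp [h]
    · simpa [h] using (by decide : (1 + 1 : ZMod 2) = 0)
  have := card_filter_add_card_filter_not (s := univ) (fun i => c i ≠ 0)
  rw [Finset.card_univ] at this
  rw [hWt, hWt, hfilter]
  omega

theorem le_card_sub_hWt_of_one_mem {C : Submodule (ZMod 2) (ι → ZMod 2)} {d : ℕ}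
    (hone : 1 ∈ C) (hmin : ∀ c ∈ C, c ≠ 0 → d ≤ hWt c) {c : ι → ZMod 2} (hc : c ∈ C)
    (hc1 : c ≠ 1) : d ≤ Fintype.card ι - hWt c := by
  rw [← hWt_one_add]
  refine hmin _ (C.add_mem hone hc) fun h => hc1 ?_
  rw [← neg_eq_of_add_eq_zero_right h]
  ext i
  exact ZModModule.neg_eq_self _

variable [DecidableEq ι]

theorem sum_signChar_eq_zero_of_notMem_dual2 (C : Submodule (ZMod 2) (ι → ZMod 2))
    [DecidablePred (· ∈ C)] {y : ι → ZMod 2} (hy : y ∉ dual2 (C : Set (ι → ZMod 2))) :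
    ∑ u : C, signChar ((u : ι → ZMod 2) ⬝ᵥ y) = 0 := by
  let dotY : C →+ ZMod 2 :=
    { toFun u := (u : ι → ZMod 2) ⬝ᵥ y
      map_zero' := zero_dotProduct y
      map_add' a b := add_dotProduct a b y }
  refine (AddChar.sum_eq_zero_iff_ne_zero (ψ := signChar.compAddMonoidHom dotY)).2 ?_
  simp only [dual2, Set.mem_ofPred_eq, not_forall] at hy
  obtain ⟨c, hc, hyc⟩ := hy
  refine AddChar.ne_zero_iff.2 ⟨⟨c, hc⟩, ?_⟩
  have : c ⬝ᵥ y = 1 := (zmod_two_eq_zero_or_one _).resolve_left (by rwa [dotProduct_comm])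
  norm_num [dotY, this, signChar_one]

theorem sum_signChar_mul_X_pow_hWt (u : ι → ZMod 2) :
    ∑ z : ι → ZMod 2, C (signChar (u ⬝ᵥ z)) * X ^ hWt z =
      (1 - X) ^ hWt u * (1 + X) ^ (Fintype.card ι - hWt u) := by
  set f : ι → ZMod 2 → ℚ[X] := fun i a => C (signChar (u i * a)) * X ^ (if a ≠ 0 then 1 else 0)
  have hterm (z : ι → ZMod 2) : C (signChar (u ⬝ᵥ z)) * X ^ hWt z = ∏ i, f i (z i) := by
    rw [prod_mul_distrib, ← map_prod, ← signChar_sum, prod_pow_eq_pow_sum, hWt, card_filter]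
    rfl
  have hfactor (i : ι) : ∑ a, f i a = if u i ≠ 0 then 1 - X else 1 + X := by
    rw [show (univ : Finset (ZMod 2)) = {0, 1} from rfl, sum_pair zero_ne_one]
    rcases zmod_two_eq_zero_or_one (u i) with h | h <;> simp [f, h, signChar_one, sub_eq_add_neg]
  have hcard : #{i | ¬ u i ≠ 0} = Fintype.card ι - hWt u := by
    have := card_filter_add_card_filter_not (s := univ) (fun i => u i ≠ 0)
    rw [Finset.card_univ] at this
    rw [hWt]
    omega
  rw [sum_congr rfl fun z _ => hterm z, ← Fintype.piFinset_univ, ← prod_univ_sum,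
    prod_congr rfl fun i _ => hfactor i, prod_ite, prod_const, prod_const, hcard]
  rfl

theorem sum_mul_signChar_eq_sum_krawtchouk (g : ℕ → ℚ) (u : ι → ZMod 2) :
    ∑ z : ι → ZMod 2, g (hWt z) * signChar (u ⬝ᵥ z) =
      ∑ t ∈ range (Fintype.card ι + 1), g t * (krawtchouk (Fintype.card ι) t).eval (hWt u : ℚ) := by
  rw [← sum_fiberwise_of_maps_to (t := range (Fintype.card ι + 1)) (g := hWt)
    fun z _ => mem_range.2 (Nat.lt_succ_of_le (hWt_le_card z))]
  refine sum_congr rfl fun t _ => ?_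
  rw [← coeff_one_sub_X_pow_mul_one_add_X_pow (hWt_le_card u), ← sum_signChar_mul_X_pow_hWt,
    finsetSum_coeff, mul_sum, sum_filter]
  refine sum_congr rfl fun z _ => ?_
  rcases eq_or_ne (hWt z) t with h | h
  · simp [h]
  · simp [h, h.symm]

theorem exists_sum_mul_signChar_eq_eval (Q : ℚ[X]) (hQ : Q.natDegree ≤ Fintype.card ι) :
    ∃ g : ℕ → ℚ, (∀ t, Q.natDegree < t → g t = 0) ∧
      ∀ u : ι → ZMod 2, ∑ z : ι → ZMod 2, g (hWt z) * signChar (u ⬝ᵥ z) = Q.eval (hWt u : ℚ) := by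
  have hlt : Q.degree < ↑(Q.natDegree + 1) :=
    degree_le_natDegree.trans_lt (WithBot.coe_lt_coe.2 (Nat.lt_succ_self _))
  obtain ⟨g, hg, hQ_eq⟩ := exists_eq_sum_smul_of_degree_lt (krawtchouk (Fintype.card ι))
    (krawtchouk_natDegree_le _) (fun t => by simp [krawtchouk_coeff_self, Nat.factorial_ne_zero])
    _ Q hlt
  refine ⟨g, fun t ht => hg t ht, fun u => ?_⟩
  rw [sum_mul_signChar_eq_sum_krawtchouk, hQ_eq, eval_finsetSum]
  simp only [eval_smul, smul_eq_mul]
  exact (sum_subset (range_subset_range.2 (by omega)) fun t _ ht => by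
    rw [hg t (by simpa using ht), zero_mul]).symm

theorem exists_ne_zero_add_mem_dual2 (C : Submodule (ZMod 2) (ι → ZMod 2))
    [DecidablePred (· ∈ C)] (f : (ι → ZMod 2) → ℚ) (v : ι → ZMod 2)
    (h : ∑ u : C, signChar ((u : ι → ZMod 2) ⬝ᵥ v) *
      ∑ z, f z * signChar ((u : ι → ZMod 2) ⬝ᵥ z) ≠ 0) :
    ∃ z, f z ≠ 0 ∧ v + z ∈ dual2 (C : Set (ι → ZMod 2)) := by
  have hswap : ∑ u : C, signChar ((u : ι → ZMod 2) ⬝ᵥ v) *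
      ∑ z, f z * signChar ((u : ι → ZMod 2) ⬝ᵥ z) =
        ∑ z, f z * ∑ u : C, signChar ((u : ι → ZMod 2) ⬝ᵥ (v + z)) := by
    simp only [mul_sum, dotProduct_add, AddChar.map_add_eq_mul]
    rw [sum_comm]
    exact sum_congr rfl fun z _ => sum_congr rfl fun u _ => by ring
  obtain ⟨z, -, hz⟩ := exists_ne_zero_of_sum_ne_zero (hswap ▸ h)
  refine ⟨z, left_ne_zero_of_mul hz, ?_⟩
  by_contra hvz
  exact right_ne_zero_of_mul hz (sum_signChar_eq_zero_of_notMem_dual2 C hvz)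

theorem exists_hWt_le_card_add_mem_dual2 (C : Submodule (ZMod 2) (ι → ZMod 2)) (W : Finset ℕ)
    (hW : ∀ c ∈ C, c ≠ 0 → hWt c ∈ W) (v : ι → ZMod 2) :
    ∃ z, hWt z ≤ #W ∧ v + z ∈ dual2 (C : Set (ι → ZMod 2)) := by
  classical
  by_cases hn : Fintype.card ι < #W
  · exact ⟨-v, (hWt_le_card _).trans hn.le, by simp [dual2]⟩
  set Q : ℚ[X] := ∏ w ∈ W.erase 0, (X - Polynomial.C (w : ℚ))
  have hQdeg : Q.natDegree ≤ #W := by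
    simpa only [Q, natDegree_finsetProd_X_sub_C_eq_card] using card_erase_le
  have hQ0 : Q.eval 0 ≠ 0 := by
    simp only [Q, eval_prod, eval_sub, eval_X, eval_C, prod_ne_zero_iff, mem_erase]
    exact fun w ⟨hw, _⟩ => by simpa [sub_eq_zero, eq_comm] using hw
  have hQC : ∀ u ∈ C, u ≠ 0 → Q.eval (hWt u : ℚ) = 0 := fun u hu hu0 => by
    simp only [Q, eval_prod, eval_sub, eval_X, eval_C]
    exact prod_eq_zero (mem_erase.2 ⟨hWt_ne_zero hu0, hW u hu hu0⟩) (sub_self _)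
  obtain ⟨g, hg, hgQ⟩ := exists_sum_mul_signChar_eq_eval (ι := ι) Q (by omega)
  have hsum : ∑ u : C, signChar ((u : ι → ZMod 2) ⬝ᵥ v) *
      ∑ z, g (hWt z) * signChar ((u : ι → ZMod 2) ⬝ᵥ z) = Q.eval 0 := by
    simp only [hgQ]
    rw [sum_eq_single (0 : C) (fun u _ hu => by rw [hQC u u.2 (by simpa using hu), mul_zero])
      (by simp)]
    simp [hWt]
  obtain ⟨z, hz, hvz⟩ := exists_ne_zero_add_mem_dual2 C _ v (hsum ▸ hQ0)
  exact ⟨z, not_lt.1 fun h => hz (hg _ (by omega)), hvz⟩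

theorem hWt_mem_of_extremal {k : ℕ} {C : Submodule (ZMod 2) (Fin (24 * k) → ZMod 2)}
    (hone : 1 ∈ C) (hde : DoublyEven (C : Set (Fin (24 * k) → ZMod 2)))
    (hmin : ∀ c ∈ C, c ≠ 0 → 4 * k + 4 ≤ hWt c) {c : Fin (24 * k) → ZMod 2} (hc : c ∈ C)
    (hc0 : c ≠ 0) : hWt c ∈ insert (24 * k) ((Icc (k + 1) (5 * k - 1)).image (4 * ·)) := by
  by_cases hc1 : c = 1
  · simp [hc1, hWt]
  have hhi := le_card_sub_hWt_of_one_mem hone hmin hc hc1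
  rw [Fintype.card_fin] at hhi
  have hlo := hmin c hc hc0
  obtain ⟨j, hj⟩ := hde c hc
  simp only [mem_insert, mem_image, mem_Icc]
  exact Or.inr ⟨j, ⟨by omega, by omega⟩, hj.symm⟩

end Z4Note

open Z4Note in
/-- any binary linear code strictly containing a binary extremal doubly
even self-dual code of length `24k` contains a nonzero vector of weight at most `4k`. -/
theorem exists_small_weight_of_strict_supercode
    (k : ℕ) (hk : 0 < k)
    (C : Submodule (ZMod 2) (Fin (24 * k) → ZMod 2))
    (hsd : SelfDual2 C)
    (hde : DoublyEven (C : Set (Fin (24 * k) → ZMod 2)))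
    (hmin : minHam (C : Set (Fin (24 * k) → ZMod 2)) = 4 * k + 4)
    (D : Submodule (ZMod 2) (Fin (24 * k) → ZMod 2))
    (hCD : C < D) :
    ∃ v ∈ D, v ≠ 0 ∧ hWt v ≤ 4 * k := by
  have hmin' : ∀ c ∈ C, c ≠ 0 → 4 * k + 4 ≤ hWt c := fun c hc hc0 =>
    hmin ▸ minHam_le_hWt (SetLike.mem_coe.2 hc) hc0
  have hone : (1 : Fin (24 * k) → ZMod 2) ∈ C := by
    rw [← SetLike.mem_coe, hsd]
    exact one_mem_dual2_of_even fun x hx => (by norm_num : 2 ∣ 4).trans (hde x hx)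
  set W := insert (24 * k) ((Finset.Icc (k + 1) (5 * k - 1)).image (4 * ·))
  have hWcard : W.card ≤ 4 * k := by
    refine (Finset.card_insert_le _ _).trans ?_
    have := Finset.card_image_le (s := Finset.Icc (k + 1) (5 * k - 1)) (f := (4 * ·))
    rw [Nat.card_Icc] at this
    omega
  obtain ⟨v, hvD, hvC⟩ := SetLike.exists_of_lt hCD
  obtain ⟨z, hz, hvz⟩ :=
    exists_hWt_le_card_add_mem_dual2 C W (fun c => hWt_mem_of_extremal hone hde hmin') v
  rw [← hsd, SetLike.mem_coe] at hvz
  exact ⟨z, by simpa using D.sub_mem (hCD.le hvz) hvD, fun h => hvC (by simpa [h] using hvz),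
    hz.trans hWcard⟩
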